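/- arXiv:1806.01148 — 4 statements merged into one kernel-verified Lean document; each statement's English description precedes it below -/
import Mathlib

section
/- For every real number t, one has the modulus identity 2·|cos(π·(1/2 + i·t)/2)| · |Γ(1/2 + i·t)| = √(2π); equivalently |(2π)^{(1/2 + i·t)}| = |2·cos(π·(1/2 + i·t)/2)·Γ(1/2 + i·t)|, so that the quantity (2π)^s/(2·cos(πs/2)·Γ(s)) has absolute value one for every s on the critical line. -/
/-!
On the critical line `conj s = 1 - s`, so Euler's reflection formula gives
`|Γ(s)|² = Γ(s) Γ(1 - s) = π / sin(π s) = π / cosh(π t)`, while the product-to-sum formula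
`|cos z|² = cos z · cos z̄ = (cos (2 Re z) + cosh (2 Im z)) / 2` gives `|cos(π s / 2)|² = cosh(π t) / 2`.
The two factors `cosh(π t)` cancel.
-/

open Complex Real ComplexConjugate

namespace Complex

theorem normSq_cos (z : ℂ) :
    normSq (cos z) = (Real.cos (2 * z.re) + Real.cosh (2 * z.im)) / 2 := by
  apply ofReal_injective
  have h := cos_add_cos (z + conj z) (z - conj z)
  rw [show (z + conj z + (z - conj z)) / 2 = z by ring,
    show (z + conj z - (z - conj z)) / 2 = conj z by ring, add_conj, sub_conj, cos_mul_I,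
    cos_conj, mul_assoc, mul_conj] at h
  push_cast at h ⊢
  linear_combination -h / 2

theorem normSq_cos_pi_mul_one_half_add_I_mul_div_two (t : ℝ) :
    normSq (cos (π * (1 / 2 + I * t) / 2)) = Real.cosh (π * t) / 2 := by
  have hre : (π * (1 / 2 + I * t) / 2 : ℂ).re = π / 4 := by simp; ring
  have him : (π * (1 / 2 + I * t) / 2 : ℂ).im = π * t / 2 := by simp
  rw [normSq_cos, hre, him, show 2 * (π / 4) = π / 2 by ring, Real.cos_pi_div_two, zero_add,
    mul_div_cancel₀ _ two_ne_zero]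

theorem conj_one_half_add_I_mul (t : ℝ) : conj (1 / 2 + I * t) = 1 - (1 / 2 + I * t) := by
  simp only [map_add, map_mul, map_div₀, map_one, map_ofNat, conj_I, conj_ofReal]
  ring

theorem sin_pi_mul_one_half_add_I_mul (t : ℝ) :
    sin (π * (1 / 2 + I * t)) = Real.cosh (π * t) := by
  rw [show (π : ℂ) * (1 / 2 + I * t) = (π * t : ℝ) * I + π / 2 by push_cast; ring,
    sin_add_pi_div_two, cos_mul_I, ofReal_cosh]

theorem normSq_Gamma_one_half_add_I_mul (t : ℝ) :
    normSq (Gamma (1 / 2 + I * t)) = π / Real.cosh (π * t) := by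
  have h := Gamma_mul_Gamma_one_sub (1 / 2 + I * t)
  rw [← conj_one_half_add_I_mul, Gamma_conj, mul_conj, sin_pi_mul_one_half_add_I_mul] at h
  exact_mod_cast h

end Complex

theorem abs_two_cos_mul_Gamma_critical_line (t : ℝ) :
    2 * ‖Complex.cos (Real.pi * (1 / 2 + Complex.I * t) / 2)‖ *
        ‖Complex.Gamma (1 / 2 + Complex.I * t)‖ =
      Real.sqrt (2 * Real.pi) := by
  rw [eq_comm, Real.sqrt_eq_iff_mul_self_eq (by positivity) (by positivity),
    show ∀ a b : ℝ, 2 * a * b * (2 * a * b) = 4 * a ^ 2 * b ^ 2 by intros; ring,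
    Complex.sq_norm, Complex.sq_norm, normSq_cos_pi_mul_one_half_add_I_mul_div_two,
    normSq_Gamma_one_half_add_I_mul]
  field_simp [(Real.cosh_pos (π * t)).ne']
  ring
end

section
/- For every real number t, the following identity of real numbers holds: γ + log(π/4) = log( cosh(π·t) / (1 + 4·t²) ) − ∑_{k=1}^{∞} [ −1/k + log(1 + 1/k + 1/(4k²) + t²/k²) ], where the series on the right converges. -/
/-!
Put `z = 1/2 + t i`. Since `|1 + z/k|² = 1 + 1/k + (1/4 + t²)/k²`, the `k`-th summand is
`2 (log |1 + z/k| - Re z / k)`. Taking log-moduli in Euler's limit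
`Γ(z) = lim n^z n! / (z (z+1) ⋯ (z+n))` gives the Weierstrass product
`log |Γ(z)| = -γ Re z - log |z| - ∑ₖ (log |1 + z/k| - Re z / k)`, the series converging because
`log (1 + w) - w = O(|w|²)`. Finally `1 - z = z̄`, so the reflection formula gives
`|Γ(z)|² = π / sin (π z) = π / cosh (π t)`, and `|z|² = (1 + 4t²)/4`.
-/

open Filter Finset Topology

namespace Complex

theorem GammaSeq_eq_cpow_div_prod (z : ℂ) (n : ℕ) :
    GammaSeq z n = (n : ℂ) ^ z / (z * ∏ j ∈ range n, (1 + z / (j + 1))) := by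
  have hprod : ∏ j ∈ range (n + 1), (z + j) =
      (z * ∏ j ∈ range n, (1 + z / (j + 1))) * n.factorial := by
    rw [prod_range_succ', ← prod_range_add_one_eq_factorial, Nat.cast_prod, mul_assoc,
      ← prod_mul_distrib, mul_comm]
    push_cast
    rw [add_zero]
    congr 1
    refine Finset.prod_congr rfl fun j _ => ?_
    have : (j : ℂ) + 1 ≠ 0 := by exact_mod_cast j.succ_ne_zero
    field_simp
    ring
  rw [GammaSeq, hprod, mul_div_mul_right _ _ (by exact_mod_cast n.factorial_ne_zero)]

theorem summable_log_one_add_div_sub (z : ℂ) :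
    Summable fun k : ℕ => log (1 + z / (k + 1)) - z / (k + 1) := by
  have hlim : Tendsto (fun k : ℕ => z / (k + 1)) atTop (𝓝 0) := by
    simpa [div_eq_mul_one_div z] using
      (tendsto_one_div_add_atTop_nhds_zero_nat (𝕜 := ℂ)).const_mul z
  refine summable_of_isBigO_nat ?_ (log_sub_self_isBigO.comp_tendsto hlim).norm_right
  refine (((Real.summable_one_div_nat_add_rpow 1 2).2 one_lt_two).mul_left (‖z‖ ^ 2)).congr
    fun k => ?_
  have hk : ‖(k : ℂ) + 1‖ = (k : ℝ) + 1 := by exact_mod_cast norm_natCast (k + 1)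
  rw [Function.comp_apply, norm_pow, norm_div, div_pow, hk, abs_of_pos (by positivity)]
  norm_cast
  ring

theorem sum_range_log_norm_one_add_div_sub {z : ℂ} (hz : ∀ m : ℕ, z ≠ -m) {n : ℕ} (hn : n ≠ 0) :
    ∑ j ∈ range n, (Real.log ‖1 + z / (j + 1)‖ - z.re / (j + 1)) =
      -z.re * (harmonic n - Real.log n) - Real.log ‖z‖ - Real.log ‖GammaSeq z n‖ := by
  have hz0 : z ≠ 0 := by simpa using hz 0
  have hfactor (j : ℕ) : 1 + z / (j + 1) ≠ 0 := by
    intro h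
    have : (j : ℂ) + 1 ≠ 0 := by exact_mod_cast j.succ_ne_zero
    field_simp at h
    exact hz (j + 1) (by push_cast; linear_combination h)
  have hprod : z * ∏ j ∈ range n, (1 + z / (j + 1)) ≠ 0 :=
    mul_ne_zero hz0 (prod_ne_zero_iff.2 fun j _ => hfactor j)
  have hcpow : (n : ℂ) ^ z ≠ 0 := by
    rw [Ne, cpow_eq_zero_iff]
    exact fun h => hn (by exact_mod_cast h.1)
  have hGammaSeq : GammaSeq z n ≠ 0 := by
    rw [GammaSeq_eq_cpow_div_prod]
    exact div_ne_zero hcpow hprod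
  have hnorm : ‖GammaSeq z n‖ * (‖z‖ * ∏ j ∈ range n, ‖1 + z / (j + 1)‖) = (n : ℝ) ^ z.re := by
    rw [← norm_prod, ← norm_mul, ← norm_mul, GammaSeq_eq_cpow_div_prod, div_mul_cancel₀ _ hprod,
      norm_natCast_cpow_of_pos (Nat.pos_of_ne_zero hn)]
  have hnorm_prod : ∏ j ∈ range n, ‖1 + z / (j + 1)‖ ≠ 0 :=
    prod_ne_zero_iff.2 fun j _ => norm_ne_zero_iff.2 (hfactor j)
  have hlog := congrArg Real.log hnorm
  rw [Real.log_mul (norm_ne_zero_iff.2 hGammaSeq) (mul_ne_zero (norm_ne_zero_iff.2 hz0) hnorm_prod),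
    Real.log_mul (norm_ne_zero_iff.2 hz0) hnorm_prod,
    Real.log_prod fun j _ => norm_ne_zero_iff.2 (hfactor j), Real.log_rpow (by positivity)] at hlog
  have hharmonic : ∑ j ∈ range n, z.re / ((j : ℝ) + 1) = z.re * harmonic n := by
    simp [harmonic, mul_sum, div_eq_mul_inv]
  rw [sum_sub_distrib, hharmonic]
  linarith

theorem hasSum_log_norm_one_add_div_sub {z : ℂ} (hz : ∀ m : ℕ, z ≠ -m) :
    HasSum (fun k : ℕ => Real.log ‖1 + z / (k + 1)‖ - z.re / (k + 1))
      (-Real.eulerMascheroniConstant * z.re - Real.log ‖z‖ - Real.log ‖Gamma z‖) := by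
  have hsum : Summable fun k : ℕ => Real.log ‖1 + z / (k + 1)‖ - z.re / (k + 1) := by
    simpa only [reCLM_apply, sub_re, log_re, ← Nat.cast_add_one, div_natCast_re] using
      (summable_log_one_add_div_sub z).mapL reCLM
  have hpartial : Tendsto
      (fun n : ℕ => -z.re * (harmonic n - Real.log n) - Real.log ‖z‖ - Real.log ‖GammaSeq z n‖)
      atTop (𝓝 (-Real.eulerMascheroniConstant * z.re - Real.log ‖z‖ - Real.log ‖Gamma z‖)) := by
    have hGamma := (GammaSeq_tendsto_Gamma z).norm.log (norm_ne_zero_iff.2 (Gamma_ne_zero hz))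
    convert ((Real.tendsto_harmonic_sub_log.const_mul (-z.re)).sub_const (Real.log ‖z‖)).sub
      hGamma using 2
    ring
  refine hsum.hasSum_iff_tendsto_nat.2 (hpartial.congr' ?_)
  filter_upwards [eventually_ne_atTop 0] with n hn
  exact (sum_range_log_norm_one_add_div_sub hz hn).symm

open ComplexConjugate in
theorem norm_Gamma_one_half_add_mul_I_sq (t : ℝ) :
    ‖Gamma (1 / 2 + t * I)‖ ^ 2 = Real.pi / Real.cosh (Real.pi * t) := by
  have hconj : 1 - (1 / 2 + t * I) = conj (1 / 2 + t * I) := by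
    apply Complex.ext <;> simp
    norm_num
  have hsin : sin (Real.pi * (1 / 2 + t * I)) = Real.cosh (Real.pi * t) := by
    rw [show (Real.pi : ℂ) * (1 / 2 + t * I) = Real.pi / 2 + (Real.pi * t : ℝ) * I by
        push_cast; ring,
      sin_add_mul_I, sin_pi_div_two, cos_pi_div_two, ofReal_cosh]
    ring
  have h := Gamma_mul_Gamma_one_sub (1 / 2 + t * I)
  rw [hconj, Gamma_conj, mul_conj', hsin] at h
  exact_mod_cast h

theorem norm_one_add_one_half_add_mul_I_div_sq (t : ℝ) (k : ℕ) :
    ‖1 + (1 / 2 + t * I) / (k + 1)‖ ^ 2 =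
      1 + 1 / ((k : ℝ) + 1) + 1 / (4 * ((k : ℝ) + 1) ^ 2) + t ^ 2 / ((k : ℝ) + 1) ^ 2 := by
  have hk : (k : ℝ) + 1 ≠ 0 := by positivity
  rw [← normSq_eq_norm_sq, show 1 + (1 / 2 + t * I) / (k + 1) =
      ((1 + 1 / (2 * ((k : ℝ) + 1)) : ℝ) : ℂ) + ((t / ((k : ℝ) + 1) : ℝ) : ℂ) * I by
        push_cast; field_simp; ring,
    normSq_add_mul_I]
  field_simp
  ring

theorem log_pi_div_four_eq (t : ℝ) :
    Real.log (Real.pi / 4) = Real.log (Real.cosh (Real.pi * t) / (1 + 4 * t ^ 2)) +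
      2 * Real.log ‖1 / 2 + t * I‖ + 2 * Real.log ‖Gamma (1 / 2 + t * I)‖ := by
  have hnorm : ‖1 / 2 + t * I‖ ^ 2 = (1 + 4 * t ^ 2) / 4 := by
    rw [← normSq_eq_norm_sq, show (1 / 2 : ℂ) = ((1 / 2 : ℝ) : ℂ) by push_cast; rfl,
      normSq_add_mul_I]
    ring
  have hcosh := Real.cosh_pos (Real.pi * t)
  have two_mul_log (x : ℝ) : 2 * Real.log x = Real.log (x ^ 2) := by simp [Real.log_pow]
  rw [two_mul_log, two_mul_log, hnorm, norm_Gamma_one_half_add_mul_I_sq,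
    ← Real.log_mul (by positivity) (by positivity), ← Real.log_mul (by positivity) (by positivity)]
  congr 1
  field_simp

end Complex

theorem real_part_identity (t : ℝ) :
    Summable (fun k : ℕ =>
      -1 / ((k : ℝ) + 1) +
        Real.log (1 + 1 / ((k : ℝ) + 1) + 1 / (4 * ((k : ℝ) + 1) ^ 2) +
          t ^ 2 / ((k : ℝ) + 1) ^ 2)) ∧
    Real.eulerMascheroniConstant + Real.log (Real.pi / 4) =
      Real.log (Real.cosh (Real.pi * t) / (1 + 4 * t ^ 2)) -
        ∑' k : ℕ,
          (-1 / ((k : ℝ) + 1) +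
            Real.log (1 + 1 / ((k : ℝ) + 1) + 1 / (4 * ((k : ℝ) + 1) ^ 2) +
              t ^ 2 / ((k : ℝ) + 1) ^ 2)) := by
  set z : ℂ := 1 / 2 + t * Complex.I
  have hz_re : z.re = 1 / 2 := by simp [z]
  have hz : ∀ m : ℕ, z ≠ -m := fun m h => by
    have := congrArg Complex.re h
    rw [hz_re, Complex.neg_re, Complex.natCast_re] at this
    linarith [m.cast_nonneg (α := ℝ)]
  have hsummand (k : ℕ) : -1 / ((k : ℝ) + 1) +
      Real.log (1 + 1 / ((k : ℝ) + 1) + 1 / (4 * ((k : ℝ) + 1) ^ 2) + t ^ 2 / ((k : ℝ) + 1) ^ 2) =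
      2 * (Real.log ‖1 + z / (k + 1)‖ - z.re / (k + 1)) := by
    rw [← Complex.norm_one_add_one_half_add_mul_I_div_sq, Real.log_pow, hz_re]
    ring
  have hsum := (Complex.hasSum_log_norm_one_add_div_sub hz).mul_left 2
  simp only [← hsummand] at hsum
  refine ⟨hsum.summable, ?_⟩
  rw [hsum.tsum_eq, hz_re, Complex.log_pi_div_four_eq t]
  ring
end

section
/- For every real number t, define F(t) = (t/2)·(γ + log(2π)) + (1/2)·arctan(2t) + (1/2)·arctan(tanh(π·t/2)) + (1/2)·∑_{k=1}^{∞} [ −t/k + arctan( t/(k + 1/2) ) ]. Then exp(2·i·F(t)) = (2π)^{(1/2 + i·t)} / ( 2·cos(π·(1/2 + i·t)/2)·Γ(1/2 + i·t) ); in particular F(t) gives, modulo π, the phase of the functional-equation ratio along the critical line. -/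
/-!
For `Re s > 0`, Gauss's product `Γ(s) = lim N^s N! / (s (s+1) ⋯ (s+N))` determines the phase of
`Γ(s)`: the unit `(s+k+1)/|s+k+1|` is `exp (i arctan (Im s / (k+1+Re s)))`, and the phase `N^{i Im s}`
of `N^s`, together with `exp (-i Im s H_N)`, converges to `exp (-i γ Im s)`. So for `s = 1/2 + it`,
`exp (i (γ t + series in phaseF))` is the phase of `1 / (s Γ(s))`. The remaining terms are
elementary: `exp (i arctan 2t) = s/|s|`, `2 cos (π s/2) = √2 (cosh (πt/2) - i sinh (πt/2))`, whose
phase is `-arctan (tanh (πt/2))`, and the reflection formula gives `|Γ(1/2 + it)|² = π / cosh (πt)`,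
which matches the moduli.
-/

open Real Complex Filter Finset Topology ComplexConjugate
open scoped Nat

noncomputable def phaseF (t : ℝ) : ℝ :=
  t / 2 * (Real.eulerMascheroniConstant + Real.log (2 * Real.pi)) +
    1 / 2 * Real.arctan (2 * t) +
    1 / 2 * Real.arctan (Real.tanh (Real.pi * t / 2)) +
    1 / 2 * ∑' k : ℕ, (-t / ((k : ℝ) + 1) + Real.arctan (t / ((k : ℝ) + 1 + 1 / 2)))

lemma exp_arctan_im_div_re_mul_I {z : ℂ} (hz : 0 < z.re) :
    cexp (Real.arctan (z.im / z.re) * I) = z / ‖z‖ := by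
  have hnorm : √(1 + (z.im / z.re) ^ 2) = ‖z‖ / z.re := by
    have : 1 + (z.im / z.re) ^ 2 = (z.re ^ 2 + z.im ^ 2) / z.re ^ 2 := by field_simp
    rw [this, Real.sqrt_div' _ (sq_nonneg _), Real.sqrt_sq hz.le, norm_eq_sqrt_sq_add_sq]
  have hre : (z.re : ℂ) ≠ 0 := by exact_mod_cast hz.ne'
  calc cexp (Real.arctan (z.im / z.re) * I) = (z.re + z.im * I) / ‖z‖ := by
        rw [exp_mul_I, ← ofReal_cos, ← ofReal_sin, Real.cos_arctan, Real.sin_arctan, hnorm]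
        push_cast
        field_simp
    _ = z / ‖z‖ := by rw [re_add_im]

lemma exp_arctan_tanh_mul_I (x : ℝ) :
    cexp (Real.arctan (Real.tanh x) * I) =
      √(Real.cosh (2 * x)) / (Real.cosh x - Real.sinh x * I) := by
  set w : ℂ := Real.cosh x + Real.sinh x * I
  have hre : w.re = Real.cosh x := by simp [w]
  have him : w.im = Real.sinh x := by simp [w, sinh_ofReal_re]
  have hnorm : ‖w‖ = √(Real.cosh (2 * x)) := by
    rw [norm_eq_sqrt_sq_add_sq, hre, him, Real.cosh_two_mul]
  have hconj : conj w = Real.cosh x - Real.sinh x * I := by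
    simp only [w, map_add, map_mul, conj_ofReal, conj_I]; ring
  have hw : w ≠ 0 := fun h => (Real.cosh_pos x).ne' (by rw [← hre, h, zero_re])
  calc cexp (Real.arctan (Real.tanh x) * I) = w / ‖w‖ := by
        rw [← exp_arctan_im_div_re_mul_I (by rw [hre]; positivity), hre, him,
          Real.tanh_eq_sinh_div_cosh]
    _ = ‖w‖ / conj w := by
        rw [div_eq_div_iff (by simpa using hw) (by simpa using hw), mul_conj', sq]
    _ = _ := by rw [hnorm, hconj]

lemma abs_arctan_sub_self_le_sq (x : ℝ) : |Real.arctan x - x| ≤ x ^ 2 := by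
  have hderiv : ∀ u ∈ Set.uIcc 0 x,
      HasDerivWithinAt (fun u => Real.arctan u - u) (1 / (1 + u ^ 2) - 1) (Set.uIcc 0 x) u :=
    fun u _ => ((Real.hasDerivAt_arctan u).sub (hasDerivAt_id u)).hasDerivWithinAt
  have hbound : ∀ u ∈ Set.uIcc 0 x, ‖1 / (1 + u ^ 2) - 1‖ ≤ |x| := by
    intro u hu
    have hux : |u| ≤ |x| := by simpa using Set.abs_sub_left_of_mem_uIcc hu
    have : 1 / (1 + u ^ 2) - 1 = -(u ^ 2 / (1 + u ^ 2)) := by field_simp; ring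
    rw [this, norm_neg, Real.norm_eq_abs, abs_of_nonneg (by positivity),
      div_le_iff₀ (by positivity)]
    nlinarith [abs_nonneg u, sq_abs u, sq_nonneg (|u| - 1)]
  simpa [sq] using (convex_uIcc 0 x).norm_image_sub_le_of_norm_hasDerivWithin_le hderiv hbound
    Set.left_mem_uIcc Set.right_mem_uIcc

lemma ofReal_cpow_eq_rpow_re_mul_exp {x : ℝ} (hx : 0 < x) (s : ℂ) :
    (x : ℂ) ^ s = ((x ^ s.re : ℝ) : ℂ) * cexp ((s.im * Real.log x : ℝ) * I) := by
  rw [cpow_def_of_ne_zero (by exact_mod_cast hx.ne'), Real.rpow_def_of_pos hx, ofReal_exp,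
    ← Complex.exp_add, ← ofReal_log hx.le]
  conv_lhs => rw [← re_add_im s]
  push_cast
  ring_nf

lemma two_mul_cos_pi_mul_div_two (t : ℝ) :
    2 * Complex.cos (π * (1 / 2 + I * t) / 2) =
      √2 * (Real.cosh (π * t / 2) - Real.sinh (π * t / 2) * I) := by
  have harg : (π : ℂ) * (1 / 2 + I * t) / 2 = (π / 4 : ℝ) + (π * t / 2 : ℝ) * I := by
    push_cast; ring
  rw [harg, Complex.cos_add, Complex.cos_mul_I, Complex.sin_mul_I, ← ofReal_cos, ← ofReal_sin,
    Real.cos_pi_div_four, Real.sin_pi_div_four, ← ofReal_cosh, ← ofReal_sinh]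
  push_cast
  ring

lemma norm_Gamma_one_half_add_mul_I (t : ℝ) :
    ‖Gamma (1 / 2 + I * t)‖ = √π / √(Real.cosh (π * t)) := by
  set s : ℂ := 1 / 2 + I * t
  have hconj : conj s = 1 - s := by simp [s, Complex.ext_iff]; norm_num
  have hsin : Complex.sin (π * s) = Real.cosh (π * t) := by
    have harg : (π : ℂ) * s = (π * t : ℝ) * I + π / 2 := by simp only [s]; push_cast; ring
    rw [harg, Complex.sin_add_pi_div_two, Complex.cos_mul_I, ofReal_cosh]
  have hreflect := Gamma_mul_Gamma_one_sub s
  rw [← hconj, Gamma_conj, mul_conj, hsin, ← ofReal_div, ofReal_inj] at hreflect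
  rw [← Real.sqrt_div' _ (Real.cosh_pos _).le, ← hreflect, ← Complex.sq_norm,
    Real.sqrt_sq (norm_nonneg _)]

/-- For `Re s > -1`, the phase `arg (1 + s/(k+1)) - Im s/(k+1)` of the factor
`(1 + s/(k+1)) exp (-s/(k+1))` in the Weierstrass product of `1/Γ`. -/
noncomputable def weierstrassPhaseTerm (s : ℂ) (k : ℕ) : ℝ :=
  -s.im / ((k : ℝ) + 1) + Real.arctan (s.im / ((k : ℝ) + 1 + s.re))

lemma abs_weierstrassPhaseTerm_le {s : ℂ} (hs : 0 ≤ s.re) (k : ℕ) :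
    |weierstrassPhaseTerm s k| ≤ (s.im ^ 2 + |s.im| * s.re) / ((k : ℝ) + 1) ^ 2 := by
  set n : ℝ := (k : ℝ) + 1
  set a := s.re
  set b := s.im
  have hn : 1 ≤ n := by simp [n]
  have harctan : |Real.arctan (b / (n + a)) - b / (n + a)| ≤ b ^ 2 / n ^ 2 := by
    refine (abs_arctan_sub_self_le_sq _).trans ?_
    rw [div_pow]
    gcongr
    linarith
  have hshift : |b / (n + a) - b / n| ≤ |b| * a / n ^ 2 := by
    rw [div_sub_div _ _ (by linarith) (by linarith),
      show b * n - (n + a) * b = -(b * a) by ring,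
      abs_div, abs_neg, abs_mul, abs_of_nonneg hs, abs_of_pos (show 0 < (n + a) * n by nlinarith)]
    gcongr
    nlinarith
  calc |weierstrassPhaseTerm s k|
      = |(Real.arctan (b / (n + a)) - b / (n + a)) + (b / (n + a) - b / n)| := by
        simp only [weierstrassPhaseTerm, n, a, b]; congr 1; ring
    _ ≤ b ^ 2 / n ^ 2 + |b| * a / n ^ 2 := (abs_add_le _ _).trans (add_le_add harctan hshift)
    _ = (b ^ 2 + |b| * a) / n ^ 2 := by ring

lemma summable_weierstrassPhaseTerm {s : ℂ} (hs : 0 ≤ s.re) :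
    Summable (weierstrassPhaseTerm s) := by
  have hsq : Summable fun k : ℕ => 1 / ((k : ℝ) + 1) ^ 2 := by
    simpa using (summable_nat_add_iff 1).mpr (Real.summable_one_div_nat_pow.mpr one_lt_two)
  refine (hsq.mul_left (s.im ^ 2 + |s.im| * s.re)).of_norm_bounded fun k => ?_
  simpa [Real.norm_eq_abs, div_eq_mul_inv] using abs_weierstrassPhaseTerm_le hs k

lemma exp_weierstrassPhaseTerm_mul_I {s : ℂ} (hs : 0 < s.re) (k : ℕ) :
    cexp (weierstrassPhaseTerm s k * I) =
      cexp ((-s.im / ((k : ℝ) + 1) : ℝ) * I) * (((k : ℂ) + 1 + s) / ‖(k : ℂ) + 1 + s‖) := by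
  have hre : ((k : ℂ) + 1 + s).re = (k : ℝ) + 1 + s.re := by simp
  have him : ((k : ℂ) + 1 + s).im = s.im := by simp
  rw [← exp_arctan_im_div_re_mul_I (by rw [hre]; positivity), hre, him, ← Complex.exp_add,
    weierstrassPhaseTerm]
  push_cast
  ring_nf

lemma prod_add_one_add_mul_GammaSeq {s : ℂ} (hs : ∀ m : ℕ, s + m ≠ 0) (N : ℕ) :
    (∏ k ∈ range N, ((k : ℂ) + 1 + s)) * s * GammaSeq s N = (N : ℂ) ^ s * N ! := by
  have hprod : (∏ k ∈ range N, ((k : ℂ) + 1 + s)) * s = ∏ j ∈ range (N + 1), (s + j) := by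
    rw [prod_range_succ']
    push_cast
    rw [add_zero]
    exact congrArg (· * s) (prod_congr rfl fun k _ => by ring)
  rw [hprod, Complex.GammaSeq, mul_div_cancel₀ _ (prod_ne_zero_iff.mpr fun j _ => hs j)]

lemma prod_add_one_add_div_norm {s : ℂ} (hs : 0 < s.re) {N : ℕ} (hN : N ≠ 0) :
    (∏ k ∈ range N, ((k : ℂ) + 1 + s)) / ‖∏ k ∈ range N, ((k : ℂ) + 1 + s)‖ =
      cexp ((s.im * Real.log N : ℝ) * I) * (‖s‖ / s) * (‖GammaSeq s N‖ / GammaSeq s N) := by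
  have hs0 : ∀ m : ℕ, s + m ≠ 0 := fun m h =>
    (by positivity : 0 < s.re + m).ne' (by simpa using congrArg re h)
  have hs' : s ≠ 0 := by simpa using hs0 0
  set P := ∏ k ∈ range N, ((k : ℂ) + 1 + s)
  set G := GammaSeq s N
  have hG : G ≠ 0 := by
    refine right_ne_zero_of_mul (a := P * s) ?_
    rw [prod_add_one_add_mul_GammaSeq hs0]
    exact mul_ne_zero (cpow_ne_zero_iff.mpr (.inl (by exact_mod_cast hN)))
      (Nat.cast_ne_zero.mpr N.factorial_ne_zero)
  obtain ⟨r, hr, hP⟩ : ∃ r : ℝ, 0 < r ∧ P = r * cexp ((s.im * Real.log N : ℝ) * I) / (s * G) := by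
    refine ⟨(N : ℝ) ^ s.re * N !, by positivity, ?_⟩
    rw [eq_div_iff (mul_ne_zero hs' hG), ← mul_assoc, prod_add_one_add_mul_GammaSeq hs0,
      ← ofReal_natCast, ofReal_cpow_eq_rpow_re_mul_exp (by positivity)]
    simp only [ofReal_mul, ofReal_natCast]
    ring
  have hnormP : ‖P‖ = r / (‖s‖ * ‖G‖) := by
    rw [hP, norm_div, norm_mul, norm_mul, norm_exp_ofReal_mul_I, norm_real,
      Real.norm_of_nonneg hr.le]
    ring
  have hr' : (r : ℂ) ≠ 0 := by exact_mod_cast hr.ne'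
  have hnorms : (‖s‖ : ℂ) ≠ 0 := by simpa using hs'
  have hnormG : (‖G‖ : ℂ) ≠ 0 := by simpa using hG
  rw [hnormP, hP]
  simp only [ofReal_div, ofReal_mul]
  field_simp

lemma prod_exp_weierstrassPhaseTerm_mul_I {s : ℂ} (hs : 0 < s.re) {N : ℕ} (hN : N ≠ 0) :
    ∏ k ∈ range N, cexp (weierstrassPhaseTerm s k * I) =
      cexp ((-(s.im * (harmonic N - Real.log N)) : ℝ) * I) * (‖s‖ / s) *
        (‖GammaSeq s N‖ / GammaSeq s N) := by
  have hharmonic : ∏ k ∈ range N, cexp ((-s.im / ((k : ℝ) + 1) : ℝ) * I) =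
      cexp ((-(s.im * harmonic N) : ℝ) * I) := by
    rw [← Complex.exp_sum, ← sum_mul, ← ofReal_sum, harmonic]
    push_cast
    rw [mul_sum, ← sum_neg_distrib]
    congr 2
    exact sum_congr rfl fun k _ => by ring
  have hsplit : cexp ((-(s.im * (harmonic N - Real.log N)) : ℝ) * I) =
      cexp ((-(s.im * harmonic N) : ℝ) * I) * cexp ((s.im * Real.log N : ℝ) * I) := by
    rw [← Complex.exp_add]; congr 1; push_cast; ring
  rw [prod_congr rfl fun k _ => exp_weierstrassPhaseTerm_mul_I hs k, prod_mul_distrib,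
    prod_div_distrib, ← ofReal_prod, ← norm_prod, hharmonic, prod_add_one_add_div_norm hs hN,
    hsplit]
  ring

lemma exp_tsum_weierstrassPhaseTerm_mul_I {s : ℂ} (hs : 0 < s.re) :
    cexp ((∑' k, weierstrassPhaseTerm s k : ℝ) * I) =
      cexp ((-(s.im * eulerMascheroniConstant) : ℝ) * I) * (‖s‖ / s) * (‖Gamma s‖ / Gamma s) := by
  have hprod : Tendsto (fun N => ∏ k ∈ range N, cexp (weierstrassPhaseTerm s k * I)) atTop
      (𝓝 (cexp ((∑' k, weierstrassPhaseTerm s k : ℝ) * I))) :=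
    ((hasSum_ofReal.mpr (summable_weierstrassPhaseTerm hs.le).hasSum).mul_right I).cexp
      |>.tendsto_prod_nat
  have hphase : Tendsto (fun N : ℕ => cexp ((-(s.im * (harmonic N - Real.log N)) : ℝ) * I)) atTop
      (𝓝 (cexp ((-(s.im * eulerMascheroniConstant) : ℝ) * I))) :=
    ((Continuous.tendsto (f := fun x : ℝ => cexp ((-(s.im * x) : ℝ) * I)) (by fun_prop) _).comp
      tendsto_harmonic_sub_log)
  have hGamma := GammaSeq_tendsto_Gamma s
  have hlim := (hphase.mul_const (‖s‖ / s)).mul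
    ((continuous_ofReal.tendsto _).comp hGamma.norm |>.div hGamma (Gamma_ne_zero_of_re_pos hs))
  refine tendsto_nhds_unique hprod (hlim.congr' ?_)
  filter_upwards [eventually_ne_atTop 0] with N hN
  exact (prod_exp_weierstrassPhaseTerm_mul_I hs hN).symm

lemma exp_two_mul_I_mul_phaseF (t : ℝ) :
    cexp (2 * I * phaseF t) = cexp ((t * Real.log (2 * π) : ℝ) * I) *
      (√(Real.cosh (π * t)) / (Real.cosh (π * t / 2) - Real.sinh (π * t / 2) * I)) *
        (‖Gamma (1 / 2 + I * t)‖ / Gamma (1 / 2 + I * t)) := by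
  set s : ℂ := 1 / 2 + I * t
  have hre : s.re = 1 / 2 := by simp [s]
  have him : s.im = t := by simp [s]
  have hsplit : 2 * I * (phaseF t : ℂ) =
      (t * (eulerMascheroniConstant + Real.log (2 * π)) : ℝ) * I + Real.arctan (s.im / s.re) * I +
        Real.arctan (Real.tanh (π * t / 2)) * I + (∑' k, weierstrassPhaseTerm s k : ℝ) * I := by
    have hsum : (∑' k : ℕ, (-t / ((k : ℝ) + 1) + Real.arctan (t / ((k : ℝ) + 1 + 1 / 2)))) =
        ∑' k, weierstrassPhaseTerm s k := by
      simp only [weierstrassPhaseTerm, hre, him]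
    rw [phaseF, hsum, hre, him, show t / (1 / 2) = 2 * t by ring]
    push_cast
    ring
  have hexp : cexp ((t * (eulerMascheroniConstant + Real.log (2 * π)) : ℝ) * I) *
      cexp ((-(t * eulerMascheroniConstant) : ℝ) * I) = cexp ((t * Real.log (2 * π) : ℝ) * I) := by
    rw [← Complex.exp_add]; push_cast; ring_nf
  have hs : s ≠ 0 := fun h => by simp [h] at hre
  have hns : (‖s‖ : ℂ) ≠ 0 := by simpa using hs
  rw [hsplit, Complex.exp_add, Complex.exp_add, Complex.exp_add,
    exp_arctan_im_div_re_mul_I (by rw [hre]; norm_num), exp_arctan_tanh_mul_I,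
    exp_tsum_weierstrassPhaseTerm_mul_I (by rw [hre]; norm_num), him, ← hexp,
    show 2 * (π * t / 2) = π * t by ring]
  field_simp

lemma cpow_div_two_mul_cos_mul_Gamma (t : ℝ) :
    (2 * (π : ℂ)) ^ (1 / 2 + I * t) /
        (2 * Complex.cos (π * (1 / 2 + I * t) / 2) * Gamma (1 / 2 + I * t)) =
      cexp ((t * Real.log (2 * π) : ℝ) * I) * √π /
        ((Real.cosh (π * t / 2) - Real.sinh (π * t / 2) * I) * Gamma (1 / 2 + I * t)) := by
  have hre : (1 / 2 + I * t : ℂ).re = 1 / 2 := by simp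
  have him : (1 / 2 + I * t : ℂ).im = t := by simp
  have h2 : (√2 : ℂ) ≠ 0 := by exact_mod_cast (by positivity : (0 : ℝ) < √2).ne'
  rw [show 2 * (π : ℂ) = ((2 * π : ℝ) : ℂ) by push_cast; ring,
    ofReal_cpow_eq_rpow_re_mul_exp (by positivity), hre, him, ← Real.sqrt_eq_rpow,
    Real.sqrt_mul zero_le_two, two_mul_cos_pi_mul_div_two, ofReal_mul, mul_assoc, mul_assoc,
    mul_div_mul_left _ _ h2]
  ring

theorem exp_phase_eq_functional_ratio (t : ℝ) :
    Complex.exp (2 * Complex.I * (phaseF t : ℂ)) =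
      (2 * (Real.pi : ℂ)) ^ ((1 / 2 + Complex.I * t : ℂ)) /
        (2 * Complex.cos (Real.pi * (1 / 2 + Complex.I * t) / 2) *
          Complex.Gamma (1 / 2 + Complex.I * t)) := by
  rw [exp_two_mul_I_mul_phaseF, cpow_div_two_mul_cos_mul_Gamma, norm_Gamma_one_half_add_mul_I,
    ofReal_div]
  have hcosh : (√(Real.cosh (π * t)) : ℂ) ≠ 0 := by
    exact_mod_cast (Real.sqrt_pos.mpr (Real.cosh_pos _)).ne'
  generalize (√(Real.cosh (π * t)) : ℂ) = c at hcosh ⊢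
  field_simp
end

section
/- For every real number t such that ζ(1/2 + i·t) ≠ 0 and 1/2 + i·t ≠ 1, with F(t) = (t/2)·(γ + log(2π)) + (1/2)·arctan(2t) + (1/2)·arctan(tanh(π·t/2)) + (1/2)·∑_{k=1}^{∞} [ −t/k + arctan( t/(k + 1/2) ) ], one has exp(2·i·F(t)) = ζ(1/2 + i·t) / ζ(1/2 − i·t). -/
/-!
For `s = 1/2 + i t` we have `1 - s = conj s`, so the functional equation `ζ(1 - s) = K(s) ζ(s)`, with
`K(s) = 2 (2π)^(-s) Γ(s) cos(πs/2)`, together with `ζ(conj s) = conj ζ(s)` and `ζ(s) ≠ 0` forces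
`‖K(s)‖ = 1`. It therefore suffices to show that `K(s) exp(2 i F(t))` is a nonnegative real, i.e. to
determine the argument of each factor of `K(s)`. For `(2π)^(-s)` and `cos(πs/2)` this is elementary;
for `Γ(s)` we pass to the limit in Euler's product `Γ(s) = lim n^s n! / ∏_{j ≤ n} (s + j)`, whose
`n`-th term has argument `t log n - ∑_{j ≤ n} arctan(t / (j + 1/2))`; the limit of this sum is
computed with the harmonic numbers, which produce `γ`.
-/

open Filter Topology Finset
open scoped ComplexOrder ComplexConjugate Real

namespace Complex

theorem arg_eq_arctan_of_re_pos {z : ℂ} (hz : 0 < z.re) : arg z = Real.arctan (z.im / z.re) := by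
  have h := abs_lt.mp (abs_arg_lt_pi_div_two_iff.mpr (Or.inl hz))
  rw [← tan_arg, Real.arctan_tan h.1 h.2]

theorem mul_exp_neg_arg_mul_I (z : ℂ) : z * exp (-arg z * I) = ‖z‖ := by
  nth_rw 1 [← norm_mul_exp_arg_mul_I z]
  rw [mul_assoc, ← exp_add, neg_mul, add_neg_cancel, exp_zero, mul_one]

theorem eq_one_of_nonneg_of_norm_eq_one {z : ℂ} (h0 : 0 ≤ z) (h1 : ‖z‖ = 1) : z = 1 := by
  rw [eq_re_of_ofReal_le h0, re_eq_norm.mpr h0, h1, ofReal_one]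

theorem ne_neg_natCast_of_re_pos {s : ℂ} (hs : 0 < s.re) (n : ℕ) : s ≠ -n := by
  rintro rfl
  simp only [neg_re, natCast_re, Left.neg_pos_iff] at hs
  exact (n.cast_nonneg.not_gt hs).elim

theorem ofReal_cpow_eq_rpow_mul_exp {a : ℝ} (ha : 0 < a) (s : ℂ) :
    (a : ℂ) ^ s = ((a ^ s.re : ℝ) : ℂ) * exp ((s.im * Real.log a : ℝ) * I) := by
  rw [cpow_def_of_ne_zero (ofReal_ne_zero.mpr ha.ne'), ← ofReal_log ha.le,
    Real.rpow_def_of_pos ha, ofReal_exp, ← exp_add]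
  congr 1
  conv_lhs => rw [← re_add_im s]
  push_cast
  ring

theorem GammaSeq_mul_exp_nonneg (s : ℂ) {n : ℕ} (hn : n ≠ 0) :
    0 ≤ GammaSeq s n * exp ((∑ j ∈ range (n + 1), arg (s + j) - s.im * Real.log n : ℝ) * I) := by
  have hprod : ∏ j ∈ range (n + 1), (s + j) = ((∏ j ∈ range (n + 1), ‖s + j‖ : ℝ) : ℂ) *
      exp ((∑ j ∈ range (n + 1), arg (s + j) : ℝ) * I) := by
    push_cast
    rw [sum_mul, exp_sum, ← prod_mul_distrib]
    exact prod_congr rfl fun j _ => (norm_mul_exp_arg_mul_I _).symm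
  have hpow := ofReal_cpow_eq_rpow_mul_exp (Nat.cast_pos.mpr (Nat.pos_of_ne_zero hn)) s
  rw [ofReal_natCast] at hpow
  have hreal : GammaSeq s n *
      exp ((∑ j ∈ range (n + 1), arg (s + j) - s.im * Real.log n : ℝ) * I) =
      (((n : ℝ) ^ s.re * n.factorial / ∏ j ∈ range (n + 1), ‖s + j‖ : ℝ) : ℂ) := by
    rw [GammaSeq, hprod, hpow]
    push_cast
    rw [sub_mul, exp_sub]
    field_simp
  rw [hreal]
  exact zero_le_real.mpr (by positivity)

theorem Gamma_mul_exp_nonneg_of_tendsto {s : ℂ} {θ : ℝ}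
    (h : Tendsto (fun n : ℕ => ∑ j ∈ range (n + 1), arg (s + j) - s.im * Real.log n) atTop
      (𝓝 θ)) :
    0 ≤ Gamma s * exp (θ * I) := by
  have hphase : Continuous fun x : ℝ => exp (x * I) := by fun_prop
  refine ge_of_tendsto ((GammaSeq_tendsto_Gamma s).mul (hphase.continuousAt.tendsto.comp h)) ?_
  filter_upwards [eventually_ne_atTop 0] with n hn
  exact GammaSeq_mul_exp_nonneg s hn

end Complex

namespace Real

theorem abs_arctan_sub_self_le (x : ℝ) : |arctan x - x| ≤ |x| ^ 3 := by
  have hderiv : ∀ u ∈ Set.uIcc 0 x,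
      HasDerivWithinAt (fun y => arctan y - y) (1 / (1 + u ^ 2) - 1) (Set.uIcc 0 x) u :=
    fun u _ => ((hasDerivAt_arctan u).sub (hasDerivAt_id u)).hasDerivWithinAt
  have hbound : ∀ u ∈ Set.uIcc 0 x, ‖1 / (1 + u ^ 2) - 1‖ ≤ x ^ 2 := by
    intro u hu
    have hux : u ^ 2 ≤ x ^ 2 := by
      simpa only [sub_zero, sq_abs] using
        pow_le_pow_left₀ (abs_nonneg _) (Set.abs_sub_left_of_mem_uIcc hu) 2
    have hpos : 0 < 1 + u ^ 2 := by positivity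
    rw [norm_eq_abs, abs_sub_comm, abs_of_nonneg (by rw [sub_nonneg, div_le_one hpos]; nlinarith),
      one_sub_div hpos.ne', add_sub_cancel_left, div_le_iff₀ hpos]
    nlinarith [sq_nonneg u]
  have := (convex_uIcc 0 x).norm_image_sub_le_of_norm_hasDerivWithin_le hderiv hbound
    Set.left_mem_uIcc Set.right_mem_uIcc
  simpa [pow_succ, abs_mul, sq_abs] using this

theorem abs_neg_div_add_arctan_le (t : ℝ) {a : ℝ} (ha : 1 ≤ a) :
    |-t / a + arctan (t / (a + 1 / 2))| ≤ (|t| ^ 3 + |t|) / a ^ 2 := by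
  have ha0 : 0 < a := by linarith
  have hcube : |t / (a + 1 / 2)| ^ 3 ≤ |t| ^ 3 / a ^ 2 := by
    rw [abs_div, abs_of_pos (show 0 < a + 1 / 2 by linarith), div_pow]
    exact div_le_div_of_nonneg_left (by positivity) (pow_pos ha0 2) (by nlinarith)
  have hdiff : |t / (a + 1 / 2) - t / a| ≤ |t| / a ^ 2 := by
    have hmul : 0 < (a + 1 / 2) * a := by nlinarith
    rw [show t / (a + 1 / 2) - t / a = -t / (2 * ((a + 1 / 2) * a)) by field_simp; ring,
      abs_div, abs_neg, abs_of_pos (show 0 < 2 * ((a + 1 / 2) * a) by linarith)]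
    exact div_le_div_of_nonneg_left (abs_nonneg t) (pow_pos ha0 2) (by nlinarith)
  calc |-t / a + arctan (t / (a + 1 / 2))|
      = |(arctan (t / (a + 1 / 2)) - t / (a + 1 / 2)) + (t / (a + 1 / 2) - t / a)| := by ring_nf
    _ ≤ |t| ^ 3 / a ^ 2 + |t| / a ^ 2 :=
        (abs_add_le _ _).trans (add_le_add ((abs_arctan_sub_self_le _).trans hcube) hdiff)
    _ = (|t| ^ 3 + |t|) / a ^ 2 := by ring

theorem summable_neg_div_add_arctan (t : ℝ) :
    Summable fun k : ℕ => -t / ((k : ℝ) + 1) + arctan (t / ((k : ℝ) + 1 + 1 / 2)) := by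
  have hdom : Summable fun k : ℕ => (|t| ^ 3 + |t|) / ((k : ℝ) + 1) ^ 2 := by
    simp_rw [div_eq_mul_one_div (|t| ^ 3 + |t|)]
    refine Summable.mul_left _ ?_
    exact_mod_cast (summable_nat_add_iff 1).mpr (summable_one_div_nat_pow.mpr one_lt_two)
  exact Summable.of_norm_bounded hdom fun k =>
    abs_neg_div_add_arctan_le t (le_add_of_nonneg_left k.cast_nonneg)

end Real

open Complex

/-- `Γ(1/2 + i t) = |Γ(1/2 + i t)| exp(-i gammaPhase t)`. -/
noncomputable def gammaPhase (t : ℝ) : ℝ :=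
  Real.arctan (2 * t) + ∑' k : ℕ, (-t / ((k : ℝ) + 1) + Real.arctan (t / ((k : ℝ) + 1 + 1 / 2))) +
    t * Real.eulerMascheroniConstant

theorem tendsto_sum_arctan_sub_mul_log (t : ℝ) :
    Tendsto (fun n : ℕ => ∑ j ∈ range (n + 1), Real.arctan (t / ((j : ℝ) + 1 / 2)) -
      t * Real.log n) atTop (𝓝 (gammaPhase t)) := by
  refine ((tendsto_const_nhds.add (Real.summable_neg_div_add_arctan t).hasSum.tendsto_sum_nat).add
    (Real.tendsto_harmonic_sub_log.const_mul t)).congr fun n => ?_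
  have hsplit : ∑ k ∈ range n, Real.arctan (t / (((k + 1 : ℕ) : ℝ) + 1 / 2)) =
      ∑ k ∈ range n, (-t / ((k : ℝ) + 1) + Real.arctan (t / ((k : ℝ) + 1 + 1 / 2))) +
        t * ∑ k ∈ range n, 1 / ((k : ℝ) + 1) := by
    rw [mul_sum, ← sum_add_distrib]
    refine sum_congr rfl fun k _ => ?_
    push_cast
    field_simp
    ring
  rw [sum_range_succ', hsplit]
  simp [harmonic, mul_comm t 2]
  ring

theorem arg_half_add_mul_I_add_natCast (t : ℝ) (j : ℕ) :
    arg (1 / 2 + I * t + j) = Real.arctan (t / ((j : ℝ) + 1 / 2)) := by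
  rw [arg_eq_arctan_of_re_pos (by simp; positivity)]
  simp [add_comm]

theorem Gamma_half_add_mul_I_mul_exp_gammaPhase_nonneg (t : ℝ) :
    0 ≤ Gamma (1 / 2 + I * t) * exp (gammaPhase t * I) := by
  have him : (1 / 2 + I * t : ℂ).im = t := by simp
  refine Gamma_mul_exp_nonneg_of_tendsto ?_
  simpa only [arg_half_add_mul_I_add_natCast, him] using tendsto_sum_arctan_sub_mul_log t

theorem cos_half_add_mul_I_mul_exp_nonneg (t : ℝ) :
    0 ≤ cos (π * (1 / 2 + I * t) / 2) * exp (Real.arctan (Real.tanh (π * t / 2)) * I) := by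
  set y := π * t / 2
  set z := cos (π * (1 / 2 + I * t) / 2) with hzdef
  have hz : z = ((√2 / 2 * Real.cosh y : ℝ) : ℂ) - ((√2 / 2 * Real.sinh y : ℝ) : ℂ) * I := by
    rw [hzdef, show π * (1 / 2 + I * t) / 2 = ((π / 4 : ℝ) : ℂ) + (y : ℂ) * I by
        simp only [y]; push_cast; ring,
      cos_add_mul_I, ← ofReal_cos, ← ofReal_sin, ← ofReal_cosh, ← ofReal_sinh,
      Real.cos_pi_div_four, Real.sin_pi_div_four]
    push_cast
    ring
  have harg : arg z = -Real.arctan (Real.tanh y) := by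
    have hre : 0 < z.re := by rw [hz]; simp; positivity
    rw [arg_eq_arctan_of_re_pos hre]
    simp [hz, neg_div, sinh_ofReal_re, mul_div_mul_left _ _ (by positivity : √2 / 2 ≠ 0),
      Real.tanh_eq_sinh_div_cosh, Real.arctan_neg]
  rw [← neg_neg (Real.arctan _), ← harg, ofReal_neg, mul_exp_neg_arg_mul_I]
  exact zero_le_real.mpr (norm_nonneg z)

theorem two_pi_cpow_neg_half_sub_mul_I_mul_exp_nonneg (t : ℝ) :
    0 ≤ (2 * π : ℂ) ^ (-(1 / 2 + I * t)) * exp ((t * Real.log (2 * π) : ℝ) * I) := by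
  rw [show (2 * π : ℂ) = ((2 * π : ℝ) : ℂ) by push_cast; ring,
    ofReal_cpow_eq_rpow_mul_exp (by positivity), mul_assoc, ← Complex.exp_add]
  simp only [neg_im, add_im, mul_im, I_re, I_im, ofReal_re, ofReal_im]
  norm_num
  positivity

theorem two_mul_phaseF (t : ℝ) :
    2 * phaseF t = t * Real.log (2 * π) + gammaPhase t + Real.arctan (Real.tanh (π * t / 2)) := by
  rw [phaseF, gammaPhase]
  ring

theorem functionalEquationFactor_mul_exp_phaseF_nonneg (t : ℝ) :
    0 ≤ 2 * (2 * π : ℂ) ^ (-(1 / 2 + I * t)) * Gamma (1 / 2 + I * t) *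
      cos (π * (1 / 2 + I * t) / 2) * exp ((2 * phaseF t : ℝ) * I) := by
  have := mul_nonneg (mul_nonneg (mul_nonneg zero_le_two
    (two_pi_cpow_neg_half_sub_mul_I_mul_exp_nonneg t))
    (Gamma_half_add_mul_I_mul_exp_gammaPhase_nonneg t)) (cos_half_add_mul_I_mul_exp_nonneg t)
  rw [two_mul_phaseF, ofReal_add, ofReal_add, add_mul, add_mul, Complex.exp_add, Complex.exp_add]
  convert this using 1
  ring

theorem norm_eq_one_of_riemannZeta_conj_eq_mul {s K : ℂ} (hζ : riemannZeta s ≠ 0)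
    (h : riemannZeta (conj s) = K * riemannZeta s) : ‖K‖ = 1 := by
  have := congrArg norm h
  rw [riemannZeta_conj, norm_conj, norm_mul] at this
  exact (mul_eq_right₀ (norm_ne_zero_iff.mpr hζ)).mp this.symm

theorem exp_phase_eq_zeta_ratio (t : ℝ)
    (hz : riemannZeta (1 / 2 + Complex.I * t) ≠ 0)
    (h1 : (1 / 2 + Complex.I * t : ℂ) ≠ 1) :
    Complex.exp (2 * Complex.I * (phaseF t : ℂ)) =
      riemannZeta (1 / 2 + Complex.I * t) / riemannZeta (1 / 2 - Complex.I * t) := by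
  have hconj : 1 / 2 - I * t = conj (1 / 2 + I * t) := by apply Complex.ext <;> simp
  have hfe := riemannZeta_one_sub (ne_neg_natCast_of_re_pos (by simp)) h1
  rw [sub_add_eq_sub_sub, show (1 : ℂ) - 1 / 2 = 1 / 2 by norm_num, hconj] at hfe
  have hone := eq_one_of_nonneg_of_norm_eq_one (functionalEquationFactor_mul_exp_phaseF_nonneg t)
    (by rw [norm_mul, norm_eq_one_of_riemannZeta_conj_eq_mul hz hfe, norm_exp_ofReal_mul_I, one_mul])
  rw [hconj, hfe, div_mul_cancel_right₀ hz, ← eq_inv_of_mul_eq_one_right hone]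
  push_cast
  ring_nf
end
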